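/- For all integers k ≥ 1 and m ≥ 1, (k+1)/(m^{k+2} (m-1)!) = ∑_{n=k}^{∞} (-1)^{n-k} s(n,k) (H_{n+m} − H_{m-1}) / (n+m)!. -/

import Mathlib

open scoped BigOperators

noncomputable def stirlingS1 (n k : ℕ) : ℝ :=
  (∏ i ∈ Finset.range n, (Polynomial.X - Polynomial.C (i : ℝ))).coeff k

noncomputable def H (n : ℕ) : ℝ := ∑ j ∈ Finset.range n, 1 / (j + 1 : ℝ)

/-!
Write `m = q + 1` and let `c(N, k) = (-1)^(N+k) s(N, k)` be the unsigned Stirling numbers, so the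
signs in the series cancel. Two facts drive the proof. First, induction on `N` using
`(1 - s)^(N+1) = (1 - s)^N - s (1 - s)^N` gives
`∫₀¹ (1 - s)^N s^q (-log s) ds = N! q! / (N+q+1)! · (H_{N+q+1} - H_q)`.
Second, the exponential generating function `∑_N c(N, k) t^N / N! = (-log (1 - t))^k / k!`,
proved by induction on `k` through the differential equation the recurrence for `c` imposes.
Hence the series equals `1/(k! q!) ∫₀¹ s^q (-log s)^(k+1) ds = (k+1)! / (k! q! (q+1)^(k+2))`,
the exchange of sum and integral being justified by dominated convergence (all terms are
nonnegative and their sum is integrable).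
-/

open Nat hiding log
open Polynomial Set MeasureTheory Real

theorem stirlingS1_eq_neg_one_pow_mul_stirlingFirst (n k : ℕ) :
    stirlingS1 n k = (-1) ^ (n + k) * stirlingFirst n k := by
  induction n generalizing k with
  | zero => cases k <;> simp [stirlingS1, coeff_one]
  | succ n ih =>
    simp only [stirlingS1] at ih ⊢
    rw [Finset.prod_range_succ]
    cases k with
    | zero =>
      rw [mul_coeff_zero, ih]
      cases n <;> simp
    | succ k =>
      rw [coeff_mul_X_sub_C, ih, ih, stirlingFirst_succ_succ]
      push_cast
      ring

theorem stirlingFirst_le_factorial (n k : ℕ) : stirlingFirst n k ≤ n ! := by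
  induction n generalizing k with
  | zero => cases k <;> simp
  | succ n ih =>
    cases k with
    | zero => simp
    | succ k =>
      rw [stirlingFirst_succ_succ, factorial_succ, add_mul, one_mul]
      exact Nat.add_le_add (Nat.mul_le_mul_left n (ih _)) (ih k)

theorem abs_stirlingFirst_div_factorial_le_one (n k : ℕ) :
    |(stirlingFirst n k : ℝ) / n !| ≤ 1 := by
  rw [abs_of_nonneg (by positivity), div_le_one (by positivity)]
  exact_mod_cast stirlingFirst_le_factorial n k

section PowerSeries

variable {c : ℕ → ℝ}

theorem summable_mul_pow_of_abs_le_one (hc : ∀ n, |c n| ≤ 1) {x : ℝ} (hx : |x| < 1) :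
    Summable fun n => c n * x ^ n :=
  .of_norm_bounded (summable_geometric_of_lt_one (abs_nonneg x) hx) fun n => by
    rw [norm_mul, norm_pow, Real.norm_eq_abs, Real.norm_eq_abs]
    exact mul_le_of_le_one_left (by positivity) (hc n)

theorem hasDerivAt_tsum_mul_pow_of_abs_le_one (hc : ∀ n, |c n| ≤ 1) {x : ℝ} (hx : |x| < 1) :
    HasDerivAt (fun y => ∑' n, c n * y ^ n) (∑' n, (n + 1) * c (n + 1) * x ^ n) x := by
  obtain ⟨r, hxr, hr1⟩ := exists_between hx
  have hr0 : 0 < r := (abs_nonneg x).trans_lt hxr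
  have hu : Summable fun n : ℕ => (n : ℝ) * r ^ (n - 1) := by
    rw [← summable_nat_add_iff 1]
    simpa using summable_choose_mul_geometric_of_norm_lt_one 1
      (show ‖r‖ < 1 by rwa [Real.norm_of_nonneg hr0.le])
  have hbound :
      ∀ n y, y ∈ Ioo (-r) r → ‖c n * (n * y ^ (n - 1))‖ ≤ n * r ^ (n - 1) := by
    intro n y hy
    rw [norm_mul, norm_mul, norm_pow, Real.norm_eq_abs, Real.norm_natCast, Real.norm_eq_abs]
    refine mul_le_of_le_one_left (by positivity) (hc n) |>.trans ?_
    gcongr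
    exact (abs_lt.2 hy).le
  have hderiv := hasDerivAt_tsum_of_isPreconnected hu isOpen_Ioo isPreconnected_Ioo
    (fun n y _ => (hasDerivAt_pow n y).const_mul (c n)) hbound
    (by simp [hr0] : (0 : ℝ) ∈ Ioo (-r) r) (summable_mul_pow_of_abs_le_one hc (by simp))
    (abs_lt.1 hxr)
  rw [(Summable.of_norm_bounded hu fun n => hbound n x (abs_lt.1 hxr)).tsum_eq_zero_add] at hderiv
  refine hderiv.congr_deriv ?_
  simp only [cast_zero, zero_mul, mul_zero, zero_add, cast_add, cast_one, add_tsub_cancel_right]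
  congr 1 with n
  ring

theorem summable_succ_mul_mul_pow_of_abs_le_one (hc : ∀ n, |c n| ≤ 1) {x : ℝ} (hx : |x| < 1) :
    Summable fun n => (n + 1) * c (n + 1) * x ^ n := by
  refine .of_norm_bounded (summable_choose_mul_geometric_of_norm_lt_one 1
    (show ‖|x|‖ < 1 by rwa [norm_abs_eq_norm])) fun n => ?_
  rw [norm_mul, norm_mul, norm_pow, Real.norm_eq_abs, Real.norm_eq_abs, Real.norm_eq_abs]
  simp only [choose_one_right, cast_add, cast_one]
  rw [abs_of_pos (by positivity)]
  exact mul_le_mul_of_nonneg_right (mul_le_of_le_one_right (by positivity) (hc _)) (by positivity)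

end PowerSeries

theorem one_sub_mul_tsum_stirlingFirst_succ (k : ℕ) {x : ℝ} (hx : |x| < 1) :
    (1 - x) * ∑' n : ℕ, (n + 1) * ((stirlingFirst (n + 1) (k + 1) : ℝ) / (n + 1)!) * x ^ n =
      ∑' n, (stirlingFirst n k : ℝ) / n ! * x ^ n := by
  set b := fun n : ℕ => (n + 1) * ((stirlingFirst (n + 1) (k + 1) : ℝ) / (n + 1)!) * x ^ n
  have hb : Summable b := summable_succ_mul_mul_pow_of_abs_le_one
    (fun n => abs_stirlingFirst_div_factorial_le_one n (k + 1)) hx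
  have hsplit : ∀ n : ℕ, b n = n * ((stirlingFirst n (k + 1) : ℝ) / n !) * x ^ n
      + (stirlingFirst n k : ℝ) / n ! * x ^ n := by
    intro n
    simp only [b, stirlingFirst_succ_succ, factorial_succ]
    push_cast
    field_simp
  have hshift :
      Summable fun n : ℕ => (n : ℝ) * ((stirlingFirst n (k + 1) : ℝ) / n !) * x ^ n := by
    rw [← summable_nat_add_iff 1]
    refine (hb.mul_left x).congr fun n => ?_
    simp only [b]
    push_cast
    ring
  have hxb :
      ∑' n : ℕ, (n : ℝ) * ((stirlingFirst n (k + 1) : ℝ) / n !) * x ^ n =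
        x * ∑' n, b n := by
    rw [hshift.tsum_eq_zero_add, ← tsum_mul_left]
    simp only [b, cast_zero, zero_mul, zero_add, cast_succ]
    congr 1 with n
    ring
  have hsum := congrArg tsum (funext hsplit)
  rw [hshift.tsum_add (summable_mul_pow_of_abs_le_one
    (fun n => abs_stirlingFirst_div_factorial_le_one n k) hx), hxb] at hsum
  linear_combination hsum

theorem hasDerivAt_neg_log_one_sub_pow_div_factorial (k : ℕ) {x : ℝ} (hx : x < 1) :
    HasDerivAt (fun y => (-log (1 - y)) ^ (k + 1) / (k + 1)!)
      ((-log (1 - x)) ^ k / k ! / (1 - x)) x := by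
  have hlog : HasDerivAt (fun y => -log (1 - y)) (1 / (1 - x)) x := by
    refine (((hasDerivAt_id x).const_sub 1).log (sub_ne_zero.2 hx.ne')).neg.congr_deriv ?_
    simp only [id, neg_div, neg_neg]
  refine ((hlog.pow (k + 1)).div_const _).congr_deriv ?_
  rw [factorial_succ]
  push_cast
  field_simp

-- For `k + 1`, both sides vanish at `0` and, by the recurrence for `stirlingFirst`, have derivative
-- `(-log (1 - t))^k / k! / (1 - t)` on `(-1, 1)`.
theorem hasSum_stirlingFirst_div_factorial_mul_pow (k : ℕ) {t : ℝ} (ht : |t| < 1) :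
    HasSum (fun n => (stirlingFirst n k : ℝ) / n ! * t ^ n) ((-log (1 - t)) ^ k / k !) := by
  induction k generalizing t with
  | zero =>
    convert hasSum_single (f := fun n => (stirlingFirst n 0 : ℝ) / n ! * t ^ n) 0 fun n hn => ?_
    · simp
    · obtain ⟨m, rfl⟩ := exists_eq_succ_of_ne_zero hn
      simp
  | succ k ih =>
    have hc := fun n => abs_stirlingFirst_div_factorial_le_one n (k + 1)
    set g := fun y => ∑' n, (stirlingFirst n (k + 1) : ℝ) / n ! * y ^ n
    set G := fun y => (-log (1 - y)) ^ (k + 1) / (k + 1)!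
    have hg : ∀ x ∈ Ioo (-1 : ℝ) 1, HasDerivAt g ((-log (1 - x)) ^ k / k ! / (1 - x)) x := by
      intro x hx
      have hx' : |x| < 1 := abs_lt.2 hx
      refine (hasDerivAt_tsum_mul_pow_of_abs_le_one hc hx').congr_deriv ?_
      rw [eq_div_iff (by linarith [hx.2]), mul_comm, one_sub_mul_tsum_stirlingFirst_succ k hx',
        (ih hx').tsum_eq]
    have hG : ∀ x ∈ Ioo (-1 : ℝ) 1, HasDerivAt G ((-log (1 - x)) ^ k / k ! / (1 - x)) x :=
      fun x hx => hasDerivAt_neg_log_one_sub_pow_div_factorial k hx.2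
    have hgG : EqOn g G (Ioo (-1) 1) := isOpen_Ioo.eqOn_of_deriv_eq isPreconnected_Ioo
      (fun x hx => (hg x hx).differentiableAt.differentiableWithinAt)
      (fun x hx => (hG x hx).differentiableAt.differentiableWithinAt)
      (fun x hx => (hg x hx).deriv.trans (hG x hx).deriv.symm) (x := 0) (by simp) <| by
        simp only [g, G]
        rw [tsum_eq_single 0 fun n hn => by simp [hn]]
        simp
    convert (summable_mul_pow_of_abs_le_one hc ht).hasSum
    exact (hgG (abs_lt.1 ht)).symm

theorem H_succ (n : ℕ) : H (n + 1) = H n + 1 / (n + 1) := by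
  simp [H, Finset.sum_range_succ]

theorem image_exp_neg_Ioi : (fun x => exp (-x)) '' Ioi 0 = Ioo 0 1 := by
  ext y
  constructor
  · rintro ⟨x, hx, rfl⟩
    exact ⟨exp_pos _, exp_lt_one_iff.2 (neg_neg_of_pos hx)⟩
  · rintro ⟨hy0, hy1⟩
    exact ⟨-log y, neg_pos.2 (log_neg hy0 hy1), by simp [exp_log hy0]⟩

theorem integral_pow_mul_neg_log_pow (a j : ℕ) :
    ∫ u in Ioo (0 : ℝ) 1, u ^ a * (-log u) ^ j = j ! / (a + 1) ^ (j + 1) := by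
  rw [← image_exp_neg_Ioi, integral_image_eq_integral_abs_deriv_smul measurableSet_Ioi
    (fun x _ => (hasDerivAt_neg x).exp.hasDerivWithinAt) (exp_injective.comp neg_injective).injOn]
  calc ∫ x in Ioi 0, |exp (-x) * -1| • (exp (-x) ^ a * (-log (exp (-x))) ^ j)
      = ∫ x in Ioi 0, x ^ ((j + 1 : ℝ) - 1) * exp (-((a + 1) * x)) := by
        refine setIntegral_congr_fun measurableSet_Ioi fun x _ => ?_
        rw [add_sub_cancel_right, rpow_natCast, log_exp, neg_neg, smul_eq_mul, abs_mul,
          abs_neg, abs_one, mul_one, abs_of_pos (exp_pos _),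
          show -((a + 1) * x) = -x + a * -x by ring, exp_add, exp_nat_mul]
        ring
    _ = (1 / (a + 1)) ^ (j + 1 : ℝ) * Gamma (j + 1) :=
        integral_rpow_mul_exp_neg_mul_Ioi (by positivity) (by positivity)
    _ = j ! / (a + 1) ^ (j + 1) := by
        rw [Gamma_nat_eq_factorial, ← cast_succ j, rpow_natCast, div_pow, one_pow,
          one_div_mul_eq_div]

-- A function whose Bochner integral is nonzero is integrable: otherwise the integral is `0`.
theorem integrableOn_pow_mul_neg_log_pow (a j : ℕ) :
    IntegrableOn (fun u => u ^ a * (-log u) ^ j) (Ioo 0 1) :=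
  .of_integral_ne_zero <| by rw [integral_pow_mul_neg_log_pow]; positivity

theorem integrableOn_one_sub_pow_mul_pow_mul_neg_log (N q : ℕ) :
    IntegrableOn (fun s => (1 - s) ^ N * s ^ q * (-log s)) (Ioo 0 1) := by
  induction N generalizing q with
  | zero => simpa using integrableOn_pow_mul_neg_log_pow q 1
  | succ N ih =>
    refine ((ih q).sub (ih (q + 1))).congr_fun (fun s _ => ?_) measurableSet_Ioo
    simp only [Pi.sub_apply]
    ring

theorem integral_one_sub_pow_mul_pow_mul_neg_log (N q : ℕ) :
    ∫ s in Ioo (0 : ℝ) 1, (1 - s) ^ N * s ^ q * (-log s) =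
      N ! * q ! / (N + q + 1)! * (H (N + q + 1) - H q) := by
  induction N generalizing q with
  | zero =>
    have hq : (q ! : ℝ) ≠ 0 := by positivity
    simpa [H_succ, factorial_succ, pow_two, hq, div_mul_cancel_right₀] using
      integral_pow_mul_neg_log_pow q 1
  | succ N ih =>
    have hsplit : ∀ s : ℝ, (1 - s) ^ (N + 1) * s ^ q * (-log s) =
        (1 - s) ^ N * s ^ q * (-log s) - (1 - s) ^ N * s ^ (q + 1) * (-log s) := fun s => by ring
    simp only [hsplit]
    rw [integral_sub (integrableOn_one_sub_pow_mul_pow_mul_neg_log N q)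
      (integrableOn_one_sub_pow_mul_pow_mul_neg_log N (q + 1)), ih, ih,
      show N + (q + 1) + 1 = N + q + 1 + 1 by ring, show N + 1 + q + 1 = N + q + 1 + 1 by ring,
      H_succ (N + q + 1), H_succ q, factorial_succ (N + q + 1), factorial_succ N, factorial_succ q]
    push_cast
    field_simp
    ring

theorem hasSum_stirlingFirst_div_mul_one_sub_pow_mul (k q : ℕ) {s : ℝ} (hs : s ∈ Ioo 0 1) :
    HasSum (fun N => (stirlingFirst N k : ℝ) / (N ! * q !) * ((1 - s) ^ N * s ^ q * (-log s)))
      (1 / (k ! * q !) * (s ^ q * (-log s) ^ (k + 1))) := by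
  have hgen := hasSum_stirlingFirst_div_factorial_mul_pow k
    (t := 1 - s) (abs_lt.2 ⟨by linarith [hs.2], by linarith [hs.1]⟩)
  rw [sub_sub_cancel] at hgen
  rw [show 1 / (k ! * q !) * (s ^ q * (-log s) ^ (k + 1)) =
      (-log s) ^ k / k ! * (s ^ q * (-log s) / q !) by ring]
  exact (hgen.mul_right _).congr_fun fun N => by ring

theorem hasSum_stirlingFirst_mul_harmonic_div_factorial (k q : ℕ) :
    HasSum (fun N => (stirlingFirst N k : ℝ) * (H (N + q + 1) - H q) / (N + q + 1)!)
      ((k + 1) / ((q + 1) ^ (k + 2) * q !)) := by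
  set F : ℕ → ℝ → ℝ := fun N s =>
    (stirlingFirst N k : ℝ) / (N ! * q !) * ((1 - s) ^ N * s ^ q * (-log s))
  set W : ℝ → ℝ := fun s => 1 / (k ! * q !) * (s ^ q * (-log s) ^ (k + 1))
  have hF_sum : ∀ s ∈ Ioo (0 : ℝ) 1, HasSum (fun N => F N s) (W s) :=
    fun s hs => hasSum_stirlingFirst_div_mul_one_sub_pow_mul k q hs
  have hF_nonneg : ∀ N, ∀ s ∈ Ioo (0 : ℝ) 1, 0 ≤ F N s := fun N s hs => by
    have : 0 ≤ -log s := neg_nonneg.2 (log_nonpos hs.1.le hs.2.le)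
    have : 0 ≤ 1 - s := by linarith [hs.2]
    have : 0 ≤ s := hs.1.le
    positivity
  have hW_integrable : IntegrableOn W (Ioo 0 1) :=
    (integrableOn_pow_mul_neg_log_pow q (k + 1)).const_mul _
  have hsum := hasSum_integral_of_dominated_convergence F
    (fun N => ((integrableOn_one_sub_pow_mul_pow_mul_neg_log N q).const_mul _).aestronglyMeasurable)
    (fun N => ae_restrict_of_forall_mem measurableSet_Ioo fun s hs =>
      (Real.norm_of_nonneg (hF_nonneg N s hs)).le)
    (ae_restrict_of_forall_mem measurableSet_Ioo fun s hs => (hF_sum s hs).summable)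
    (hW_integrable.congr_fun (fun s hs => (hF_sum s hs).tsum_eq.symm) measurableSet_Ioo)
    (ae_restrict_of_forall_mem measurableSet_Ioo hF_sum)
  have hF_integral : ∀ N, ∫ s in Ioo (0 : ℝ) 1, F N s =
      (stirlingFirst N k : ℝ) * (H (N + q + 1) - H q) / (N + q + 1)! := fun N => by
    rw [integral_const_mul, integral_one_sub_pow_mul_pow_mul_neg_log]
    field_simp
  have hW_integral : ∫ s in Ioo (0 : ℝ) 1, W s = (k + 1) / ((q + 1) ^ (k + 2) * q !) := by
    rw [integral_const_mul, integral_pow_mul_neg_log_pow, factorial_succ]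
    push_cast
    field_simp
  rw [← hW_integral]
  exact hsum.congr_fun fun N => (hF_integral N).symm

theorem stirling_harmonic_series_m_general (k m : ℕ) (hm : 1 ≤ m) :
    ((k : ℝ) + 1) / ((m : ℝ) ^ (k + 2) * (Nat.factorial (m - 1))) =
      ∑' n : ℕ, (-1) ^ n * stirlingS1 (n + k) k * (H (n + k + m) - H (m - 1)) /
        (Nat.factorial (n + k + m)) := by
  obtain ⟨q, rfl⟩ : ∃ q, m = q + 1 := ⟨m - 1, by omega⟩
  have hsum := hasSum_stirlingFirst_mul_harmonic_div_factorial k q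
  rw [← hasSum_nat_add_iff' k, Finset.sum_eq_zero fun N hN => by
    rw [stirlingFirst_eq_zero_of_lt (Finset.mem_range.1 hN), cast_zero, zero_mul, zero_div],
    sub_zero] at hsum
  push_cast
  rw [← hsum.tsum_eq]
  refine tsum_congr fun n => ?_
  rw [stirlingS1_eq_neg_one_pow_mul_stirlingFirst, ← mul_assoc, ← pow_add,
    Even.neg_one_pow ⟨n + k, by ring⟩, one_mul, ← add_assoc (n + k)]

theorem stirling_harmonic_series_m (k m : ℕ) (hk : 1 ≤ k) (hm : 1 ≤ m) :
    ((k : ℝ) + 1) / ((m : ℝ) ^ (k + 2) * (Nat.factorial (m - 1))) =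
      ∑' n : ℕ, (-1) ^ n * stirlingS1 (n + k) k * (H (n + k + m) - H (m - 1)) /
        (Nat.factorial (n + k + m)) :=
  stirling_harmonic_series_m_general k m hm
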